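/- Let I ⊆ ℝ be an open interval and let x_n, ω_n : I → ℝ (n = 1,…,N) be differentiable functions with x_1(t) < ⋯ < x_N(t) and ω_n(t) ≠ 0 for all t ∈ I, satisfying the multi-peakon system x_n′(t) = (1/2) Σ_{k=1}^N ω_k(t) e^{−|x_n(t)−x_k(t)|} and ω_n′(t) = (1/2) Σ_{k=1}^N ω_n(t) ω_k(t) sgn(x_n(t)−x_k(t)) e^{−|x_n(t)−x_k(t)|} (with sgn(0)=0). Then the flow is isospectral: for all s, t ∈ I and all z ∈ ℂ, W(z, t) = W(z, s), where W(·, t) is the Wronskian polynomial built from the data x_1(t) < ⋯ < x_N(t), ω_1(t),…,ω_N(t) and υ_1 = ⋯ = υ_N = 0. -/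

import Mathlib

/-!
Write the Jost solution to the right of the first `n` peakons as `a_n e^{x/2} + b_n e^{-x/2}`;
the Wronskian is `a_N`. With `P_n = ½ Σ_{k<n} ω_k e^{x_k}` and `Q_n = ½ Σ_{n≤k<N} ω_k e^{-x_k}`,
the peakon equations give, peakon by peakon, the Lax-type relations `ȧ_n = Q_n b_n` and
`2z ḃ_n = b_n - 2z P_n a_n`. Since `Q_N = 0`, the Wronskian has zero time derivative.
-/

open scoped BigOperators

/-- Transfer matrix across an interval of length `d` for `-f'' + (1/4) f = 0`. -/
noncomputable def Tmat (d : ℝ) : Matrix (Fin 2) (Fin 2) ℂ :=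
  !![Complex.cosh ((d : ℂ) / 2), 2 * Complex.sinh ((d : ℂ) / 2);
     (1 / 2) * Complex.sinh ((d : ℂ) / 2), Complex.cosh ((d : ℂ) / 2)]

/-- Interface matrix at a point carrying weight `w` and dipole `v`. -/
noncomputable def Omat (w v : ℝ) (z : ℂ) : Matrix (Fin 2) (Fin 2) ℂ :=
  !![1, 0; -(z * (w : ℂ) + z ^ 2 * (v : ℂ)), 1]

/-- The value `(φ₋(z, x_N+), φ₋'(z, x_N+))` obtained by propagating the initial data
`(e^{x_0/2}, (1/2) e^{x_0/2})` through all the point interactions (0-indexed data). -/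
noncomputable def transVec (N : ℕ) (x w v : ℕ → ℝ) (z : ℂ) : Fin 2 → ℂ :=
  Matrix.mulVec
    ((((List.range (N - 1)).reverse.map
        (fun j => Omat (w (j + 1)) (v (j + 1)) z * Tmat (x (j + 1) - x j))).prod)
      * Omat (w 0) (v 0) z)
    ![Complex.exp ((x 0 : ℂ) / 2), (1 / 2) * Complex.exp ((x 0 : ℂ) / 2)]

/-- The Wronskian polynomial `W(z)` of the generalized spectral problem
`-f'' + (1/4) f = z ω f + z² υ f` (`W ≡ 1` when `N = 0`). -/
noncomputable def Wron (N : ℕ) (x w v : ℕ → ℝ) (z : ℂ) : ℂ :=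
  if N = 0 then 1
  else Complex.exp (-(x (N - 1) : ℂ) / 2) *
    (transVec N x w v z 1 + (1 / 2) * transVec N x w v z 0)

/-- The Weyl--Titchmarsh function `M(z)`. -/
noncomputable def WeylM (N : ℕ) (x w v : ℕ → ℝ) (z : ℂ) : ℂ :=
  Complex.exp ((x (N - 1) : ℂ) / 2) *
    ((1 / 2) * transVec N x w v z 0 - transVec N x w v z 1) / Wron N x w v z

/-- `f` (with distributional derivative represented by `f'`) is a solution at `z` of the
generalized spectral problem `-f'' + (1/4) f = z ω f + z² υ f` with
`ω = Σ_{n<N} w n δ_{x n}`, `υ = Σ_{n<N} v n δ_{x n}`: it is continuous, twice differentiable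
away from the points `x n` with `f'' = (1/4) f` there, and the one-sided limits of `f'` at
each `x n` exist and satisfy the jump condition
`f'(x_n+) - f'(x_n-) = -(z w_n + z² v_n) f (x_n)`. -/
def IsSol (N : ℕ) (x w v : ℕ → ℝ) (z : ℂ) (f f' : ℝ → ℂ) : Prop :=
  Continuous f ∧
  (∀ t : ℝ, (∀ n < N, t ≠ x n) →
    HasDerivAt f (f' t) t ∧ HasDerivAt f' ((1 / 4) * f t) t) ∧
  (∀ n < N, ∃ L R : ℂ,
    Filter.Tendsto f' (nhdsWithin (x n) (Set.Iio (x n))) (nhds L) ∧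
    Filter.Tendsto f' (nhdsWithin (x n) (Set.Ioi (x n))) (nhds R) ∧
    R - L = -(z * (w n : ℂ) + z ^ 2 * (v n : ℂ)) * f (x n))

open scoped Matrix

open Complex in
/-- A solution of `-f'' + f/4 = 0` is `a e^{x/2} + b e^{-x/2}`; crossing a peakon `(x, w)`,
continuity and the jump `f'(x+) - f'(x-) = -z w f(x)` change its coefficients `(a, b)` thus. -/
noncomputable def jostStep (x w : ℝ) (z : ℂ) (p : ℂ × ℂ) : ℂ × ℂ :=
  (p.1 - z * w * (p.1 + p.2 * exp (-x)), p.2 + z * w * (p.1 * exp x + p.2))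

/-- The coefficients of the Jost solution to the right of the first `n` peakons. -/
noncomputable def jostCoeff (x w : ℕ → ℝ) (z : ℂ) : ℕ → ℂ × ℂ
  | 0 => (1, 0)
  | n + 1 => jostStep (x n) (w n) z (jostCoeff x w z n)

open Complex in
/-- The value and derivative at `x` of `a e^{x/2} + b e^{-x/2}`. -/
noncomputable def jostVec (x : ℝ) (p : ℂ × ℂ) : Fin 2 → ℂ :=
  ![p.1 * exp (x / 2) + p.2 * exp (-x / 2), (p.1 * exp (x / 2) - p.2 * exp (-x / 2)) / 2]

lemma Tmat_mulVec_jostVec (x y : ℝ) (p : ℂ × ℂ) :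
    Tmat (y - x) *ᵥ jostVec x p = jostVec y p := by
  have hE : Complex.exp ((y - x) / 2) * Complex.exp (x / 2) = Complex.exp (y / 2) := by
    rw [← Complex.exp_add]; ring_nf
  have hF : Complex.exp (-((y - x) / 2)) * Complex.exp (-x / 2) = Complex.exp (-y / 2) := by
    rw [← Complex.exp_add]; ring_nf
  ext i
  fin_cases i <;> simp [jostVec, Tmat, Complex.cosh, Complex.sinh]
  · linear_combination p.1 * hE + p.2 * hF
  · linear_combination p.1 / 2 * hE - p.2 / 2 * hF

lemma Omat_mulVec_jostVec (x w : ℝ) (z : ℂ) (p : ℂ × ℂ) :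
    Omat w 0 z *ᵥ jostVec x p = jostVec x (jostStep x w z p) := by
  have hE : Complex.exp x * Complex.exp (-x / 2) = Complex.exp (x / 2) := by
    rw [← Complex.exp_add]; ring_nf
  have hF : Complex.exp (-x) * Complex.exp (x / 2) = Complex.exp (-x / 2) := by
    rw [← Complex.exp_add]; ring_nf
  ext i
  fin_cases i <;> simp [jostVec, Omat, jostStep]
  · linear_combination z * w * p.2 * hF - z * w * p.1 * hE
  · linear_combination z * w * p.2 / 2 * hF + z * w * p.1 / 2 * hE

lemma transfer_mulVec_jostVec (x w : ℕ → ℝ) (z : ℂ) (n : ℕ) :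
    (((List.range n).reverse.map
        (fun j => Omat (w (j + 1)) 0 z * Tmat (x (j + 1) - x j))).prod * Omat (w 0) 0 z)
      *ᵥ jostVec (x 0) (1, 0) = jostVec (x n) (jostCoeff x w z (n + 1)) := by
  induction n with
  | zero =>
    simp only [List.range_zero, List.reverse_nil, List.map_nil, List.prod_nil, one_mul]
    exact Omat_mulVec_jostVec _ _ _ _
  | succ n ih =>
    rw [List.range_succ, List.reverse_append, List.map_append, List.prod_append]
    simp only [List.reverse_singleton, List.map_singleton, List.prod_singleton]
    rw [mul_assoc, ← Matrix.mulVec_mulVec, ih, ← Matrix.mulVec_mulVec, Tmat_mulVec_jostVec,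
      Omat_mulVec_jostVec]
    rfl

lemma Wron_eq_jostCoeff (N : ℕ) (x w : ℕ → ℝ) (z : ℂ) :
    Wron N x w (fun _ => 0) z = (jostCoeff x w z N).1 := by
  rcases N with _ | N
  · simp [Wron, jostCoeff]
  have hvec : transVec (N + 1) x w (fun _ => 0) z = jostVec (x N) (jostCoeff x w z (N + 1)) := by
    have hinit :
        ![Complex.exp (x 0 / 2), 1 / 2 * Complex.exp (x 0 / 2)] = jostVec (x 0) (1, 0) := by
      simp [jostVec]; ring
    rw [← transfer_mulVec_jostVec, ← hinit]
    rfl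
  have h : Complex.exp (-x N / 2) * Complex.exp (x N / 2) = 1 := by
    rw [← Complex.exp_add]; ring_nf; exact Complex.exp_zero
  rw [Wron, if_neg N.succ_ne_zero, hvec, jostVec]
  simp only [Nat.add_sub_cancel, Matrix.cons_val_one, Matrix.cons_val_zero]
  linear_combination (jostCoeff x w z (N + 1)).1 * h

/-- To the right of the first `n` peakons and to the left of the others,
`Σ_k w_k e^{-|ξ - x_k|} = 2 (e^{-ξ} leftSum x w n + e^{ξ} rightSum N x w n)`. -/
noncomputable def leftSum (x w : ℕ → ℝ) (n : ℕ) : ℝ :=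
  (1 / 2) * ∑ k ∈ Finset.range n, w k * Real.exp (x k)

noncomputable def rightSum (N : ℕ) (x w : ℕ → ℝ) (n : ℕ) : ℝ :=
  (1 / 2) * ∑ k ∈ Finset.Ico n N, w k * Real.exp (-x k)

lemma leftSum_zero (x w : ℕ → ℝ) : leftSum x w 0 = 0 := by
  simp [leftSum]

lemma leftSum_succ (x w : ℕ → ℝ) (n : ℕ) :
    leftSum x w (n + 1) = leftSum x w n + w n * Real.exp (x n) / 2 := by
  rw [leftSum, leftSum, Finset.sum_range_succ]
  ring

lemma rightSum_self (N : ℕ) (x w : ℕ → ℝ) : rightSum N x w N = 0 := by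
  simp [rightSum]

lemma rightSum_of_lt {N n : ℕ} (x w : ℕ → ℝ) (hn : n < N) :
    rightSum N x w n = rightSum N x w (n + 1) + w n * Real.exp (-x n) / 2 := by
  rw [rightSum, rightSum, Finset.sum_eq_sum_Ico_succ_bot hn]
  ring

lemma exp_neg_abs_sub_of_le {a b : ℝ} (h : b ≤ a) :
    Real.exp (-|a - b|) = Real.exp (-a) * Real.exp b := by
  rw [abs_of_nonneg (sub_nonneg.mpr h), ← Real.exp_add]
  ring_nf

lemma exp_neg_abs_sub_of_ge {a b : ℝ} (h : a ≤ b) :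
    Real.exp (-|a - b|) = Real.exp a * Real.exp (-b) := by
  rw [abs_of_nonpos (sub_nonpos.mpr h), ← Real.exp_add]
  ring_nf

lemma peakon_velocity_eq {N : ℕ} {x : ℕ → ℝ} (w : ℕ → ℝ) (hx : StrictMonoOn x (Set.Iio N))
    {n : ℕ} (hn : n < N) :
    (1 / 2) * ∑ k ∈ Finset.range N, w k * Real.exp (-|x n - x k|)
      = Real.exp (-x n) * leftSum x w (n + 1) + Real.exp (x n) * rightSum N x w (n + 1) := by
  have hleft : ∑ k ∈ Finset.range (n + 1), w k * Real.exp (-|x n - x k|)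
      = Real.exp (-x n) * ∑ k ∈ Finset.range (n + 1), w k * Real.exp (x k) := by
    rw [Finset.mul_sum]
    refine Finset.sum_congr rfl fun k hk => ?_
    have hkn : k ≤ n := Nat.lt_succ_iff.mp (Finset.mem_range.mp hk)
    rw [exp_neg_abs_sub_of_le (hx.monotoneOn (hkn.trans_lt hn) hn hkn)]
    ring
  have hright : ∑ k ∈ Finset.Ico (n + 1) N, w k * Real.exp (-|x n - x k|)
      = Real.exp (x n) * ∑ k ∈ Finset.Ico (n + 1) N, w k * Real.exp (-x k) := by
    rw [Finset.mul_sum]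
    refine Finset.sum_congr rfl fun k hk => ?_
    obtain ⟨hnk, hkN⟩ := Finset.mem_Ico.mp hk
    rw [exp_neg_abs_sub_of_ge (hx hn hkN hnk).le]
    ring
  rw [← Finset.sum_range_add_sum_Ico _ hn, hleft, hright, leftSum, rightSum]
  ring

lemma peakon_weight_rate_eq {N : ℕ} {x : ℕ → ℝ} (w : ℕ → ℝ) (hx : StrictMonoOn x (Set.Iio N))
    {n : ℕ} (hn : n < N) :
    (1 / 2) * ∑ k ∈ Finset.range N,
        w n * w k * Real.sign (x n - x k) * Real.exp (-|x n - x k|)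
      = w n * (Real.exp (-x n) * leftSum x w n - Real.exp (x n) * rightSum N x w (n + 1)) := by
  have hleft : ∑ k ∈ Finset.range n, w n * w k * Real.sign (x n - x k) * Real.exp (-|x n - x k|)
      = w n * Real.exp (-x n) * ∑ k ∈ Finset.range n, w k * Real.exp (x k) := by
    rw [Finset.mul_sum]
    refine Finset.sum_congr rfl fun k hk => ?_
    have hxkn := hx (Finset.mem_range.mp hk |>.trans hn) hn (Finset.mem_range.mp hk)
    rw [exp_neg_abs_sub_of_le hxkn.le, Real.sign_of_pos (sub_pos.mpr hxkn)]
    ring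
  have hright : ∑ k ∈ Finset.Ico (n + 1) N,
        w n * w k * Real.sign (x n - x k) * Real.exp (-|x n - x k|)
      = -(w n * Real.exp (x n) * ∑ k ∈ Finset.Ico (n + 1) N, w k * Real.exp (-x k)) := by
    rw [Finset.mul_sum, ← Finset.sum_neg_distrib]
    refine Finset.sum_congr rfl fun k hk => ?_
    obtain ⟨hnk, hkN⟩ := Finset.mem_Ico.mp hk
    have hxnk := hx hn hkN hnk
    rw [exp_neg_abs_sub_of_ge hxnk.le, Real.sign_of_neg (sub_neg.mpr hxnk)]
    ring
  rw [← Finset.sum_range_add_sum_Ico _ hn, Finset.sum_range_succ, hleft, hright, sub_self,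
    Real.sign_zero, leftSum, rightSum]
  ring

lemma hasDerivAt_jostStep {X W : ℝ → ℝ} {a b : ℝ → ℂ} {z : ℂ} {P Q u : ℝ}
    (ha : HasDerivAt a ((Q + W u * Real.exp (-X u) / 2 : ℝ) * b u) u)
    (hb : HasDerivAt (fun t => 2 * z * b t) (b u - 2 * z * P * a u) u)
    (hX : HasDerivAt X
      (Real.exp (-X u) * (P + W u * Real.exp (X u) / 2) + Real.exp (X u) * Q) u)
    (hW : HasDerivAt W (W u * (Real.exp (-X u) * P - Real.exp (X u) * Q)) u) :
    HasDerivAt (fun t => (jostStep (X t) (W t) z (a t, b t)).1)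
        (Q * (jostStep (X u) (W u) z (a u, b u)).2) u ∧
      HasDerivAt (fun t => 2 * z * (jostStep (X t) (W t) z (a t, b t)).2)
        ((jostStep (X u) (W u) z (a u, b u)).2
          - 2 * z * (P + W u * Real.exp (X u) / 2 : ℝ) * (jostStep (X u) (W u) z (a u, b u)).1)
        u := by
  have hE := hX.ofReal_comp.cexp
  have hF := hX.ofReal_comp.fun_neg.cexp
  have hWc := hW.ofReal_comp
  have hEF : Complex.exp (X u) * Complex.exp (-X u) = 1 := by
    rw [← Complex.exp_add, add_neg_cancel, Complex.exp_zero]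
  constructor
  · have hfun : (fun t => (jostStep (X t) (W t) z (a t, b t)).1)
        = fun t => a t - W t * (z * a t + 2 * z * b t * Complex.exp (-X t) / 2) := by
      funext t
      simp only [jostStep]
      ring
    rw [hfun]
    refine (ha.fun_sub (hWc.fun_mul ((ha.const_mul z).fun_add
      ((hb.fun_mul hF).div_const 2)))).congr_deriv ?_
    simp only [jostStep]
    push_cast
    linear_combination (2 * Q * W u * b u * z + W u ^ 2 * Complex.exp (-X u) * b u * z / 2) * hEF
  · have hfun : (fun t => 2 * z * (jostStep (X t) (W t) z (a t, b t)).2)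
        = fun t =>
          2 * z * b t + W t * (2 * z ^ 2 * (a t * Complex.exp (X t)) + z * (2 * z * b t)) := by
      funext t
      simp only [jostStep]
      ring
    rw [hfun]
    refine (hb.fun_add (hWc.fun_mul (((ha.fun_mul hE).const_mul (2 * z ^ 2)).fun_add
      (hb.const_mul z)))).congr_deriv ?_
    simp only [jostStep]
    push_cast
    linear_combination
      (4 * z ^ 2 * P * a u * W u + z ^ 2 * a u * W u ^ 2 * Complex.exp (X u)) * hEF

lemma hasDerivAt_jostCoeff {N : ℕ} {x w : ℕ → ℝ → ℝ} {u : ℝ} (z : ℂ)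
    (hx : StrictMonoOn (fun k => x k u) (Set.Iio N))
    (hxd : ∀ n < N, HasDerivAt (x n)
      ((1 / 2) * ∑ k ∈ Finset.range N, w k u * Real.exp (-|x n u - x k u|)) u)
    (hwd : ∀ n < N, HasDerivAt (w n)
      ((1 / 2) * ∑ k ∈ Finset.range N,
        w n u * w k u * Real.sign (x n u - x k u) * Real.exp (-|x n u - x k u|)) u)
    {n : ℕ} (hn : n ≤ N) :
    HasDerivAt (fun t => (jostCoeff (fun k => x k t) (fun k => w k t) z n).1)
        (rightSum N (fun k => x k u) (fun k => w k u) n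
          * (jostCoeff (fun k => x k u) (fun k => w k u) z n).2) u ∧
      HasDerivAt (fun t => 2 * z * (jostCoeff (fun k => x k t) (fun k => w k t) z n).2)
        ((jostCoeff (fun k => x k u) (fun k => w k u) z n).2
          - 2 * z * leftSum (fun k => x k u) (fun k => w k u) n
            * (jostCoeff (fun k => x k u) (fun k => w k u) z n).1) u := by
  induction n with
  | zero => constructor <;> simp [jostCoeff, leftSum_zero, hasDerivAt_const]
  | succ n ih =>
    have hnN : n < N := hn
    obtain ⟨ha, hb⟩ := ih hnN.le
    rw [rightSum_of_lt _ _ hnN] at ha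
    rw [leftSum_succ]
    exact hasDerivAt_jostStep ha hb
      ((hxd n hnN).congr_deriv (by rw [peakon_velocity_eq _ hx hnN, leftSum_succ]))
      ((hwd n hnN).congr_deriv (peakon_weight_rate_eq (fun k => w k u) hx hnN))

lemma Convex.eq_of_hasDerivAt_zero {E : Type*} [NormedAddCommGroup E] [NormedSpace ℝ E]
    {I : Set ℝ} (hI : Convex ℝ I) {f : ℝ → E} (hf : ∀ u ∈ I, HasDerivAt f 0 u)
    {s t : ℝ} (hs : s ∈ I) (ht : t ∈ I) : f s = f t := by
  have h := hI.norm_image_sub_le_of_norm_hasDerivWithin_le (C := 0)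
    (fun u hu => (hf u hu).hasDerivWithinAt) (fun _ _ => norm_zero.le) hs ht
  rw [zero_mul, norm_le_zero_iff, sub_eq_zero] at h
  exact h.symm

theorem stmt_16_general (N : ℕ) (I : Set ℝ) (hIc : I.OrdConnected)
    (x w : ℕ → ℝ → ℝ)
    (hx : ∀ t ∈ I, ∀ i j, i < j → j < N → x i t < x j t)
    (hxd : ∀ t ∈ I, ∀ n, n < N → HasDerivAt (x n)
      ((1 / 2) * ∑ k ∈ Finset.range N, w k t * Real.exp (-|x n t - x k t|)) t)
    (hwd : ∀ t ∈ I, ∀ n, n < N → HasDerivAt (w n)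
      ((1 / 2) * ∑ k ∈ Finset.range N,
        w n t * w k t * Real.sign (x n t - x k t) * Real.exp (-|x n t - x k t|)) t) :
    ∀ s ∈ I, ∀ t ∈ I, ∀ z : ℂ,
      Wron N (fun n => x n s) (fun n => w n s) (fun _ => 0) z
        = Wron N (fun n => x n t) (fun n => w n t) (fun _ => 0) z := by
  intro s hs t ht z
  have hconst : ∀ u ∈ I,
      HasDerivAt (fun r => (jostCoeff (fun n => x n r) (fun n => w n r) z N).1) 0 u := by
    intro u hu
    have hmono : StrictMonoOn (fun k => x k u) (Set.Iio N) :=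
      fun i _ j hj hij => hx u hu i j hij hj
    have h := (hasDerivAt_jostCoeff z hmono (hxd u hu) (hwd u hu) le_rfl).1
    rwa [rightSum_self, Complex.ofReal_zero, zero_mul] at h
  simp only [Wron_eq_jostCoeff]
  exact hIc.convex.eq_of_hasDerivAt_zero hconst hs ht

/-- the multi-peakon flow is isospectral: along any solution of the
multi-peakon ODE system on an open interval `I`, the Wronskian polynomial of the
associated spectral problem (with `υ = 0`) is independent of time. -/
theorem stmt_16 (N : ℕ) (I : Set ℝ) (hIo : IsOpen I) (hIc : I.OrdConnected)
    (x w : ℕ → ℝ → ℝ)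
    (hx : ∀ t ∈ I, ∀ i j, i < j → j < N → x i t < x j t)
    (hxd : ∀ t ∈ I, ∀ n, n < N → HasDerivAt (x n)
      ((1 / 2) * ∑ k ∈ Finset.range N, w k t * Real.exp (-|x n t - x k t|)) t)
    (hwd : ∀ t ∈ I, ∀ n, n < N → HasDerivAt (w n)
      ((1 / 2) * ∑ k ∈ Finset.range N,
        w n t * w k t * Real.sign (x n t - x k t) * Real.exp (-|x n t - x k t|)) t)
    (hw : ∀ t ∈ I, ∀ n, n < N → w n t ≠ 0) :
    ∀ s ∈ I, ∀ t ∈ I, ∀ z : ℂ,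
      Wron N (fun n => x n s) (fun n => w n s) (fun _ => 0) z
        = Wron N (fun n => x n t) (fun n => w n t) (fun _ => 0) z :=
  stmt_16_general N I hIc x w hx hxd hwd
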